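/- Let G be an amenable locally compact group. Then for every w ∈ W_Φ(G) and every Γ ∈ UCB_Ψ(Ĝ)*, ν(w) □ Γ = Γ □ ν(w); in particular, W_Φ(G) (embedded via ν) is contained in the center, and hence in the topological center, of the Banach algebra UCB_Ψ(Ĝ)*. -/

import Mathlib

/-! Since `A_Φ(G)` is commutative, `ν(w)` acts on the generators `u ⬝ T` of `UCB_Ψ(Ĝ)` as the
multiplier `w`: `ν(w) ⊙ (u ⬝ T) = (w u) ⬝ T`, while `Γ ⊙ (u ⬝ T) = u ⬝ (Γ ⊙ T)` for every `Γ`.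
Evaluating both Arens products at `u ⬝ T` gives `⟨ν(w) □ Γ, u ⬝ T⟩ = ⟨Γ, (w u) ⬝ T⟩ = ⟨Γ □ ν(w), u ⬝ T⟩`,
and by density the two functionals agree on `UCB_Ψ(Ĝ)`. The same computation shows that
`ν(w) ⊙ ·` maps `UCB_Ψ(Ĝ)` into itself, and `ν(w) □ Γ = Γ □ ν(w)` is `Γ` composed with this fixed
operator, hence `w*`-continuous in `Γ`. -/

open MeasureTheory Filter Topology NormedSpace
open scoped ENNReal ZeroAtInfty

noncomputable section

/-! ### Young functions and the Δ₂ and MA conditions -/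

/-- A (real-valued, continuous) Young function. -/
structure IsYoungFunction (Φ : ℝ → ℝ) : Prop where
  even : ∀ x, Φ (-x) = Φ x
  convexOn : ConvexOn ℝ Set.univ Φ
  nonneg : ∀ x, 0 ≤ Φ x
  map_zero : Φ 0 = 0
  continuous : Continuous Φ
  tendsto_atTop : Tendsto Φ atTop atTop

/-- `(Φ, Ψ)` is a complementary pair of Young functions:
`Ψ y = sup { x * |y| - Φ x : x ≥ 0 }`. -/
def IsComplementaryYoungPair (Φ Ψ : ℝ → ℝ) : Prop :=
  IsYoungFunction Φ ∧ IsYoungFunction Ψ ∧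
    ∀ y, Ψ y = sSup {z | ∃ x ≥ (0 : ℝ), z = x * |y| - Φ x}

/-- The Δ₂-condition for a Young function. -/
def HasDeltaTwo (Φ : ℝ → ℝ) : Prop :=
  ∃ k > (0 : ℝ), ∃ x₀ ≥ (0 : ℝ), ∀ x ≥ x₀, Φ (2 * x) ≤ k * Φ x

/-- The Milnes–Akimonič (MA) condition for a Young function. -/
def HasMACondition (Φ : ℝ → ℝ) : Prop :=
  ∀ ε > (0 : ℝ), ∃ β > (1 : ℝ), ∃ x₀ ≥ (0 : ℝ), ∀ x ≥ x₀,
    β * deriv Φ x ≤ deriv Φ ((1 + ε) * x)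

/-! ### Orlicz spaces -/

section Orlicz

variable {G : Type*} [MeasurableSpace G]

/-- Membership in the Orlicz space `L^Φ(G)`. -/
def MemOrlicz (Φ : ℝ → ℝ) (μ : Measure G) (f : G → ℂ) : Prop :=
  AEStronglyMeasurable f μ ∧ ∃ β > (0 : ℝ), ∫⁻ x, ENNReal.ofReal (Φ (β * ‖f x‖)) ∂μ < ⊤

/-- The Luxemburg (gauge) norm `N_Φ(f)` on `L^Φ(G)`. -/
def luxemburgNorm (Φ : ℝ → ℝ) (μ : Measure G) (f : G → ℂ) : ℝ :=
  sInf {k | 0 < k ∧ ∫⁻ x, ENNReal.ofReal (Φ (‖f x‖ / k)) ∂μ ≤ 1}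

/-- The Orlicz norm `‖f‖_Φ`, where `Ψ` is the Young function complementary to `Φ`. -/
def orliczNorm (Φ Ψ : ℝ → ℝ) (μ : Measure G) (f : G → ℂ) : ℝ :=
  sSup {r | ∃ g : G → ℂ, (∫⁻ x, ENNReal.ofReal (Ψ (‖g x‖)) ∂μ ≤ 1) ∧
    r = ∫ x, ‖f x‖ * ‖g x‖ ∂μ}

end Orlicz

/-! ### The Orlicz Figà-Talamanca Herz algebra `A_Φ(G)` -/

section Aphi

variable {G : Type*} [MeasurableSpace G] [Group G] [TopologicalSpace G]

/-- `f, g` give an admissible representation `u = ∑' n, f n ⋆ (g n)ᵛ` of `u` for `A_Φ(G)`,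
where `ǧ x = g x⁻¹`, so that `(f ⋆ ǧ) x = ∫ y, f y * g (x⁻¹ * y)`. -/
def IsAphiDecomposition (μ : Measure G) (Φ Ψ : ℝ → ℝ) (u : G → ℂ)
    (f g : ℕ → G → ℂ) : Prop :=
  (∀ n, MemOrlicz Φ μ (f n)) ∧ (∀ n, MemOrlicz Ψ μ (g n)) ∧
    Summable (fun n => luxemburgNorm Φ μ (f n) * orliczNorm Ψ Φ μ (g n)) ∧
    ∀ x, u x = ∑' n, ∫ y, f n y * g n (x⁻¹ * y) ∂μ

/-- Membership in `A_Φ(G)` for an element of `C₀(G, ℂ)`. -/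
def MemAphi (μ : Measure G) (Φ Ψ : ℝ → ℝ) (u : C₀(G, ℂ)) : Prop :=
  ∃ f g, IsAphiDecomposition μ Φ Ψ (⇑u) f g

/-- The norm of `A_Φ(G)`. -/
def aphiNorm (μ : Measure G) (Φ Ψ : ℝ → ℝ) (u : C₀(G, ℂ)) : ℝ :=
  sInf {r | ∃ f g, IsAphiDecomposition μ Φ Ψ (⇑u) f g ∧
    r = ∑' n, luxemburgNorm Φ μ (f n) * orliczNorm Ψ Φ μ (g n)}

/-- `A`, together with the embedding `ι : A → C₀(G, ℂ)`, *is* the Orlicz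
Figà-Talamanca Herz algebra `A_Φ(G)`: a commutative Banach algebra of
`C₀`-functions (with pointwise operations) whose members are exactly the functions
admitting an `A_Φ`-decomposition, and carrying the `A_Φ(G)`-norm. -/
structure IsOrliczFigaTalamancaHerzAlgebra (μ : Measure G) (Φ Ψ : ℝ → ℝ)
    (A : Type*) [NonUnitalNormedCommRing A] [NormedSpace ℂ A]
    (ι : A → C₀(G, ℂ)) : Prop where
  injective : Function.Injective ι
  map_add : ∀ a b, ι (a + b) = ι a + ι b
  map_smul : ∀ (c : ℂ) (a), ι (c • a) = c • ι a
  map_mul : ∀ a b, ι (a * b) = ι a * ι b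
  mem_range_iff : ∀ u, (∃ a, ι a = u) ↔ MemAphi μ Φ Ψ u
  norm_eq : ∀ a, ‖a‖ = aphiNorm μ Φ Ψ (ι a)

end Aphi

/-! ### The first Arens product on the double dual of a Banach algebra -/

section Arens

variable (A : Type*) [NonUnitalNormedRing A] [NormedSpace ℂ A]
  [SMulCommClass ℂ A A] [IsScalarTower ℂ A A]

open ContinuousLinearMap in
/-- The module action `u • T` of `A` on its dual: `⟨u • T, v⟩ = ⟨T, u * v⟩`. -/
def dotAct (u : A) (T : StrongDual ℂ A) : StrongDual ℂ A :=
  T.comp (ContinuousLinearMap.mul ℂ A u)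

open ContinuousLinearMap in
/-- The action `dotAct` as a continuous bilinear map, `(T, u) ↦ u • T`. -/
def dotActR : StrongDual ℂ A →L[ℂ] A →L[ℂ] StrongDual ℂ A :=
  ((compL ℂ A (A →L[ℂ] A) (StrongDual ℂ A)).flip (ContinuousLinearMap.mul ℂ A)).comp
    (compL ℂ A A ℂ)

open ContinuousLinearMap in
/-- The operation `Γ ⊙ T` on `A** × A*`: `⟨Γ ⊙ T, u⟩ = ⟨Γ, u • T⟩`. -/
def arensOdot : StrongDual ℂ (StrongDual ℂ A) →L[ℂ] StrongDual ℂ A →L[ℂ] StrongDual ℂ A :=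
  letI : SeminormedAddCommGroup ((A →L[ℂ] StrongDual ℂ A) →L[ℂ] StrongDual ℂ A) :=
    ContinuousLinearMap.toSeminormedAddCommGroup (𝕜 := ℂ) (𝕜₂ := ℂ) (E := A →L[ℂ] StrongDual ℂ A)
      (F := StrongDual ℂ A) (σ₁₂ := RingHom.id ℂ)
  letI : NormedSpace ℂ ((A →L[ℂ] StrongDual ℂ A) →L[ℂ] StrongDual ℂ A) :=
    ContinuousLinearMap.toNormedSpace (𝕜 := ℂ) (𝕜₂ := ℂ) (E := A →L[ℂ] StrongDual ℂ A)
      (F := StrongDual ℂ A) (σ₁₂ := RingHom.id ℂ)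
  letI : SeminormedAddCommGroup (StrongDual ℂ A →L[ℂ] A →L[ℂ] StrongDual ℂ A) :=
    ContinuousLinearMap.toSeminormedAddCommGroup (𝕜 := ℂ) (𝕜₂ := ℂ) (E := StrongDual ℂ A)
      (F := A →L[ℂ] StrongDual ℂ A) (σ₁₂ := RingHom.id ℂ)
  letI : NormedSpace ℂ (StrongDual ℂ A →L[ℂ] A →L[ℂ] StrongDual ℂ A) :=
    ContinuousLinearMap.toNormedSpace (𝕜 := ℂ) (𝕜₂ := ℂ) (E := StrongDual ℂ A)
      (F := A →L[ℂ] StrongDual ℂ A) (σ₁₂ := RingHom.id ℂ)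
  letI : SeminormedAddCommGroup (StrongDual ℂ A →L[ℂ] StrongDual ℂ A) :=
    ContinuousLinearMap.toSeminormedAddCommGroup (𝕜 := ℂ) (𝕜₂ := ℂ) (E := StrongDual ℂ A)
      (F := StrongDual ℂ A) (σ₁₂ := RingHom.id ℂ)
  letI : NormedSpace ℂ (StrongDual ℂ A →L[ℂ] StrongDual ℂ A) :=
    ContinuousLinearMap.toNormedSpace (𝕜 := ℂ) (𝕜₂ := ℂ) (E := StrongDual ℂ A)
      (F := StrongDual ℂ A) (σ₁₂ := RingHom.id ℂ)
  ((compL ℂ (StrongDual ℂ A) (A →L[ℂ] StrongDual ℂ A) (StrongDual ℂ A)).flip (dotActR A)).comp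
    (compL ℂ A (StrongDual ℂ A) ℂ)

/-- The first Arens product `Γ' □ Γ` on the double dual `A**`:
`⟨Γ' □ Γ, T⟩ = ⟨Γ', Γ ⊙ T⟩`. -/
def arens (Γ' Γ : StrongDual ℂ (StrongDual ℂ A)) : StrongDual ℂ (StrongDual ℂ A) :=
  Γ'.comp (arensOdot A Γ)

/-- The space `UCB_Ψ(Ĝ) = A* ⬝ A`: the norm closure in `A*` of the linear span of
`{u • T : u ∈ A, T ∈ A*}`. -/
def UCBSubmodule : Submodule ℂ (StrongDual ℂ A) :=
  (Submodule.span ℂ {T | ∃ (u : A) (S : StrongDual ℂ A), T = dotAct A u S}).topologicalClosure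

variable {A} in
theorem dotAct_mem_UCBSubmodule (u : A) (S : StrongDual ℂ A) :
    dotAct A u S ∈ UCBSubmodule A :=
  Submodule.le_topologicalClosure _ (Submodule.subset_span ⟨u, S, rfl⟩)

variable {A} in
/-- The restriction of `Γ ∈ A**` to the subspace `UCB_Ψ(Ĝ) ⊆ A*`. -/
def restrictToUCB (Γ : StrongDual ℂ (StrongDual ℂ A)) : StrongDual ℂ ↥(UCBSubmodule A) :=
  Γ.comp (UCBSubmodule A).subtypeL

end Arens

/-! ### Dual maps, supports, radicals, topological centres, amenability -/

/-- The adjoint (dual map) of a continuous linear map. -/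
def dualMapL {E F : Type*} [NormedAddCommGroup E] [NormedSpace ℂ E]
    [NormedAddCommGroup F] [NormedSpace ℂ F] (m : E →L[ℂ] F) :
    StrongDual ℂ F →L[ℂ] StrongDual ℂ E :=
  (ContinuousLinearMap.compL ℂ E F ℂ).flip m

section Support

variable {G : Type*} [TopologicalSpace G] {A : Type*} [NonUnitalNormedCommRing A]
  [NormedSpace ℂ A]

/-- The support of a functional `T ∈ A* = PM_Ψ(G)`: `x ∉ supp T` iff there is a
neighbourhood `V` of `x` such that `⟨T, v⟩ = 0` for all `v ∈ A` supported in `V`. -/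
def pmSupport (ι : A → C₀(G, ℂ)) (T : StrongDual ℂ A) : Set G :=
  {x | ∀ V ∈ nhds x, ∃ a : A, tsupport ⇑(ι a) ⊆ V ∧ T a ≠ 0}

end Support

/-- `z` is left quasi-regular with respect to the multiplication `mul`:
there is `b` with `b + z + b * z = 0` (i.e. `1 + z` has a left inverse `1 + b`
in the unitization). -/
def IsLeftQuasiRegularWith {R : Type*} [AddCommGroup R] (mul : R → R → R) (z : R) : Prop :=
  ∃ b, b + z + mul b z = 0

/-- Membership in the Jacobson radical of the (possibly non-unital) ring `(R, +, mul)`: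
every element of the right ideal generated by `a` is left quasi-regular. -/
def MemJacobsonRadicalWith {R : Type*} [AddCommGroup R] (mul : R → R → R) (a : R) : Prop :=
  ∀ (x : R) (n : ℤ), IsLeftQuasiRegularWith mul (mul a x + n • a)

/-- The (possibly non-unital) ring `(R, +, mul)` is semi-simple: its Jacobson radical
is `{0}`. -/
def IsSemisimpleWith {R : Type*} [AddCommGroup R] (mul : R → R → R) : Prop :=
  ∀ a, MemJacobsonRadicalWith mul a → a = 0

/-- The topological centre of the dual of `E` with respect to a product `mul` on the
dual: the set of all `m` such that `m' ↦ mul m m'` is `w*`-`w*`-continuous. -/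
def topCenterWith {E : Type*} [NormedAddCommGroup E] [NormedSpace ℂ E]
    (mul : StrongDual ℂ E → StrongDual ℂ E → StrongDual ℂ E) : Set (StrongDual ℂ E) :=
  {m | Continuous fun m' : WeakDual ℂ E =>
    StrongDual.toWeakDual (mul m (WeakDual.toStrongDual m'))}

section Amenable

variable {G : Type*} [MeasurableSpace G] [Group G]

/-- Amenability of `G`: there is a positive, norm-one, left translation invariant
linear functional on `L^∞(G)`. -/
def HasLeftInvariantMean (μ : Measure G) : Prop :=
  ∃ Λ : Lp ℝ ⊤ μ →L[ℝ] ℝ, ‖Λ‖ = 1 ∧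
    (∀ f : Lp ℝ ⊤ μ, (∀ᵐ y ∂μ, 0 ≤ f y) → 0 ≤ Λ f) ∧
    ∀ (x : G) (f g : Lp ℝ ⊤ μ), (∀ᵐ y ∂μ, g y = f (x⁻¹ * y)) → Λ g = Λ f

end Amenable

/-- A normed space is weakly sequentially complete if every weakly Cauchy sequence
converges weakly. -/
def WeaklySequentiallyComplete (E : Type*) [NormedAddCommGroup E] [NormedSpace ℂ E] : Prop :=
  ∀ u : ℕ → E, (∀ T : StrongDual ℂ E, CauchySeq fun n => T (u n)) →
    ∃ x : E, ∀ T : StrongDual ℂ E, Tendsto (fun n => T (u n)) atTop (nhds (T x))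

section PF

variable {G : Type*} [MeasurableSpace G] [Group G] [TopologicalSpace G]

/-- The algebra of `Ψ`-pseudofunctions `PF_Ψ(G)`, realised inside `A_Φ(G)* = PM_Ψ(G)`:
the norm closure of the span of the functionals induced by `L¹(G)`-functions. -/
def PFSubmodule (μ : Measure G) {A : Type*} [NonUnitalNormedCommRing A]
    [NormedSpace ℂ A] (ι : A → C₀(G, ℂ)) : Submodule ℂ (StrongDual ℂ A) :=
  (Submodule.span ℂ {T | ∃ f : G → ℂ, Integrable f μ ∧
    ∀ a, T a = ∫ x, f x * ι a x ∂μ}).topologicalClosure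

end PF

section ArensMultiplier

variable {A : Type*}

section Ring

variable [NonUnitalNormedRing A] [NormedSpace ℂ A] [SMulCommClass ℂ A A] [IsScalarTower ℂ A A]

theorem dotAct_apply (u : A) (T : StrongDual ℂ A) (a : A) : dotAct A u T a = T (u * a) := rfl

theorem arensOdot_apply (Γ : StrongDual ℂ (StrongDual ℂ A)) (S : StrongDual ℂ A) (v : A) :
    arensOdot A Γ S v = Γ (dotAct A v S) := rfl

theorem arens_apply (Γ' Γ : StrongDual ℂ (StrongDual ℂ A)) (S : StrongDual ℂ A) :
    arens A Γ' Γ S = Γ' (arensOdot A Γ S) := rfl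

theorem dotAct_dotAct (u v : A) (T : StrongDual ℂ A) :
    dotAct A v (dotAct A u T) = dotAct A (u * v) T :=
  ContinuousLinearMap.ext fun a => congrArg T (mul_assoc u v a).symm

theorem arensOdot_dotAct (Γ : StrongDual ℂ (StrongDual ℂ A)) (u : A) (S : StrongDual ℂ A) :
    arensOdot A Γ (dotAct A u S) = dotAct A u (arensOdot A Γ S) :=
  ContinuousLinearMap.ext fun v => by rw [arensOdot_apply, dotAct_dotAct]; rfl

theorem eqOn_UCBSubmodule {F : Type*} [TopologicalSpace F] [AddCommMonoid F] [Module ℂ F]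
    [T2Space F] {f g : StrongDual ℂ A →L[ℂ] F}
    (h : ∀ u T, f (dotAct A u T) = g (dotAct A u T)) : Set.EqOn f g (UCBSubmodule A) := by
  rw [UCBSubmodule, Submodule.topologicalClosure_coe]
  refine ContinuousLinearMap.eqOn_closure_span ?_
  rintro _ ⟨u, T, rfl⟩
  exact h u T

theorem mapsTo_UCBSubmodule {L : StrongDual ℂ A →L[ℂ] StrongDual ℂ A}
    (h : ∀ u T, L (dotAct A u T) ∈ UCBSubmodule A) :
    ∀ S ∈ UCBSubmodule A, L S ∈ UCBSubmodule A := by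
  have hle : UCBSubmodule A ≤ (UCBSubmodule A).comap L.toLinearMap := by
    refine Submodule.topologicalClosure_minimal _ ?_
      ((Submodule.isClosed_topologicalClosure _).preimage L.continuous)
    rw [Submodule.span_le]
    rintro _ ⟨u, T, rfl⟩
    exact h u T
  exact fun S hS => hle hS

theorem exists_restrictToUCB_eq (Γ : StrongDual ℂ (UCBSubmodule A)) :
    ∃ Γ' : StrongDual ℂ (StrongDual ℂ A), restrictToUCB Γ' = Γ := by
  obtain ⟨Γ', hΓ', -⟩ := exists_extension_norm_eq (UCBSubmodule A) Γ
  exact ⟨Γ', ContinuousLinearMap.ext hΓ'⟩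

theorem restrictToUCB_arens_eq_comp (Γ Γ₀ : StrongDual ℂ (StrongDual ℂ A))
    (h : ∀ S ∈ UCBSubmodule A, arensOdot A Γ₀ S ∈ UCBSubmodule A) :
    restrictToUCB (arens A Γ Γ₀) = (restrictToUCB Γ).comp ((arensOdot A Γ₀).restrict h) :=
  rfl

end Ring

section CommRing

variable [NonUnitalNormedCommRing A] [NormedSpace ℂ A] [SMulCommClass ℂ A A]
  [IsScalarTower ℂ A A] {Γ₀ : StrongDual ℂ (StrongDual ℂ A)} {m : A → A}

theorem arensOdot_dotAct_of_multiplier (hm : ∀ u T, Γ₀ (dotAct A u T) = T (m u))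
    (u : A) (T : StrongDual ℂ A) :
    arensOdot A Γ₀ (dotAct A u T) = dotAct A (m u) T :=
  ContinuousLinearMap.ext fun v => by
    rw [arensOdot_apply, dotAct_dotAct, mul_comm, ← dotAct_dotAct, hm, dotAct_apply,
      dotAct_apply, mul_comm]

theorem arens_dotAct_comm_of_multiplier (hm : ∀ u T, Γ₀ (dotAct A u T) = T (m u))
    (Γ : StrongDual ℂ (StrongDual ℂ A)) (u : A) (T : StrongDual ℂ A) :
    arens A Γ₀ Γ (dotAct A u T) = arens A Γ Γ₀ (dotAct A u T) := by
  rw [arens_apply, arensOdot_dotAct, hm, arensOdot_apply, arens_apply,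
    arensOdot_dotAct_of_multiplier hm]

theorem restrictToUCB_arens_comm_of_multiplier (hm : ∀ u T, Γ₀ (dotAct A u T) = T (m u))
    (Γ : StrongDual ℂ (StrongDual ℂ A)) :
    restrictToUCB (arens A Γ₀ Γ) = restrictToUCB (arens A Γ Γ₀) :=
  ContinuousLinearMap.ext fun S => eqOn_UCBSubmodule (arens_dotAct_comm_of_multiplier hm Γ) S.2

theorem arensOdot_mapsTo_UCBSubmodule_of_multiplier
    (hm : ∀ u T, Γ₀ (dotAct A u T) = T (m u)) :
    ∀ S ∈ UCBSubmodule A, arensOdot A Γ₀ S ∈ UCBSubmodule A :=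
  mapsTo_UCBSubmodule fun u T => by
    rw [arensOdot_dotAct_of_multiplier hm]
    exact dotAct_mem_UCBSubmodule _ _

end CommRing

end ArensMultiplier

theorem mem_topCenterWith_of_eq_comp {E : Type*} [NormedAddCommGroup E] [NormedSpace ℂ E]
    {mul : StrongDual ℂ E → StrongDual ℂ E → StrongDual ℂ E} {m : StrongDual ℂ E}
    (K : E →L[ℂ] E) (h : ∀ Γ, mul m Γ = Γ.comp K) : m ∈ topCenterWith mul :=
  WeakDual.continuous_of_continuous_eval fun y =>
    (WeakDual.eval_continuous (K y)).congr fun Γ => by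
      simp only [h]
      rfl

/-! ### Standing hypotheses -/

variable {G : Type*} [Group G] [TopologicalSpace G] [IsTopologicalGroup G]
  [LocallyCompactSpace G] [MeasurableSpace G] [BorelSpace G]

theorem wphi_subset_topCenter_ucb_dual_general
    (μ : Measure G)
    (A : Type*) [NonUnitalNormedCommRing A] [NormedSpace ℂ A] [SMulCommClass ℂ A A]
    [IsScalarTower ℂ A A] (ι : A → C₀(G, ℂ))
    (mul' : StrongDual ℂ ↥(UCBSubmodule A) → StrongDual ℂ ↥(UCBSubmodule A) → StrongDual ℂ ↥(UCBSubmodule A))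
    (hmul' : ∀ Γ Γ' : StrongDual ℂ (StrongDual ℂ A),
      mul' (restrictToUCB Γ) (restrictToUCB Γ') = restrictToUCB (arens A Γ Γ'))
    (act : StrongDual ℂ ↥(PFSubmodule μ ι) → A → A)
    (νmap : StrongDual ℂ ↥(PFSubmodule μ ι) → StrongDual ℂ ↥(UCBSubmodule A))
    (hνmap : ∀ (w : StrongDual ℂ ↥(PFSubmodule μ ι)) (u : A) (T : StrongDual ℂ A),
      νmap w ⟨dotAct A u T, dotAct_mem_UCBSubmodule u T⟩ = T (act w u)) :
    ∀ w : StrongDual ℂ ↥(PFSubmodule μ ι),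
      (∀ Γ : StrongDual ℂ ↥(UCBSubmodule A), mul' (νmap w) Γ = mul' Γ (νmap w)) ∧
      νmap w ∈ topCenterWith (E := ↥(UCBSubmodule A)) mul' := by
  intro w
  obtain ⟨Γw, hΓw⟩ := exists_restrictToUCB_eq (νmap w)
  have hmult : ∀ u T, Γw (dotAct A u T) = T (act w u) := fun u T => by
    rw [← hνmap, ← hΓw]
    rfl
  have hcomm : ∀ Γ, mul' (νmap w) Γ = mul' Γ (νmap w) := fun Γ => by
    obtain ⟨Γ', rfl⟩ := exists_restrictToUCB_eq Γ
    rw [← hΓw, hmul', hmul', restrictToUCB_arens_comm_of_multiplier hmult]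
  have hmaps := arensOdot_mapsTo_UCBSubmodule_of_multiplier hmult
  refine ⟨hcomm, mem_topCenterWith_of_eq_comp ((arensOdot A Γw).restrict hmaps) fun Γ => ?_⟩
  obtain ⟨Γ', rfl⟩ := exists_restrictToUCB_eq Γ
  rw [hcomm, ← hΓw, hmul', restrictToUCB_arens_eq_comp _ _ hmaps]

/-- Let `G` be amenable.  Then for every `w ∈ W_Φ(G)` (the dual of
`PF_Ψ(G)`) and every `Γ ∈ UCB_Ψ(Ĝ)*`, `ν(w) □ Γ = Γ □ ν(w)`; in particular `W_Φ(G)`,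
embedded via `ν`, is contained in the centre, and hence in the topological centre, of
the Banach algebra `UCB_Ψ(Ĝ)*`.  Here `mul'` is the multiplication on `UCB_Ψ(Ĝ)*`
induced by the first Arens product, `act w u = w ⬝ u ∈ A_Φ(G)` is the multiplier
action of `W_Φ(G)` on `A_Φ(G)`, and `ν = νmap` satisfies `⟨ν w, u ⬝ T⟩ = ⟨T, w u⟩`. -/
theorem wphi_subset_topCenter_ucb_dual
    (μ : Measure G) [μ.IsHaarMeasure] (Φ Ψ : ℝ → ℝ)
    (hpair : IsComplementaryYoungPair Φ Ψ) (hΦΔ : HasDeltaTwo Φ) (hΨΔ : HasDeltaTwo Ψ)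
    (hAmen : HasLeftInvariantMean μ)
    (A : Type*) [NonUnitalNormedCommRing A] [NormedSpace ℂ A] [SMulCommClass ℂ A A]
    [IsScalarTower ℂ A A] [CompleteSpace A] (ι : A → C₀(G, ℂ))
    (hA : IsOrliczFigaTalamancaHerzAlgebra μ Φ Ψ A ι)
    (mul' : StrongDual ℂ ↥(UCBSubmodule A) → StrongDual ℂ ↥(UCBSubmodule A) → StrongDual ℂ ↥(UCBSubmodule A))
    (hmul' : ∀ Γ Γ' : StrongDual ℂ (StrongDual ℂ A),
      mul' (restrictToUCB Γ) (restrictToUCB Γ') = restrictToUCB (arens A Γ Γ'))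
    (act : StrongDual ℂ ↥(PFSubmodule μ ι) → A → A)
    (hact : ∀ (w : StrongDual ℂ ↥(PFSubmodule μ ι)) (u : A) (T : StrongDual ℂ A)
      (hT : T ∈ PFSubmodule μ ι) (hT' : dotAct A u T ∈ PFSubmodule μ ι),
        T (act w u) = w ⟨dotAct A u T, hT'⟩)
    (νmap : StrongDual ℂ ↥(PFSubmodule μ ι) → StrongDual ℂ ↥(UCBSubmodule A))
    (hνmap : ∀ (w : StrongDual ℂ ↥(PFSubmodule μ ι)) (u : A) (T : StrongDual ℂ A),
      νmap w ⟨dotAct A u T, dotAct_mem_UCBSubmodule u T⟩ = T (act w u)) :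
    ∀ w : StrongDual ℂ ↥(PFSubmodule μ ι),
      (∀ Γ : StrongDual ℂ ↥(UCBSubmodule A), mul' (νmap w) Γ = mul' Γ (νmap w)) ∧
      νmap w ∈ topCenterWith (E := ↥(UCBSubmodule A)) mul' :=
  wphi_subset_topCenter_ucb_dual_general μ A ι mul' hmul' act νmap hνmap

end
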